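/- arXiv:1604.01582 — 6 statements merged into one kernel-verified Lean document; each statement's English description precedes it below -/
import Mathlib

section
/- Let k ≥ 1 and n ≥ 2k+1. For A ∈ V(n,k) (a k-subset of [n] independent in C_n), the n-level of A equals 0 if and only if A ∈ V(n−1,k), i.e., A is a k-subset of [n−1] independent in the cycle C_{n−1}. -/
open Finset

/-- The set of `k`-subsets of `[n] = {1,...,n}` that are independent in the cycle `C_n`,
i.e. contain no two cyclically consecutive elements (the cyclic successor of `i ∈ [n]`
is `i % n + 1`). -/
def SchV (n k : ℕ) : Finset (Finset ℕ) :=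
  (Finset.Icc 1 n).powerset.filter (fun A => A.card = k ∧ ∀ i ∈ A, i % n + 1 ∉ A)

/-- The core of a set: remove `1` if present, otherwise remove the maximum element. -/
def core (A : Finset ℕ) : Finset ℕ :=
  if 1 ∈ A then A.erase 1 else A.erase (A.sup id)

/-- The set `Λ_{n,i}`: `{2,4,…,i−1} ∪ {n−i+1,n−i+3,…,n}` for odd `i`,
and `{1,3,…,i−1} ∪ {n−i+1,n−i+3,…,n−1}` for even `i`. -/
def Lam (n i : ℕ) : Finset ℕ :=
  if i % 2 = 1 then
    ((Finset.range ((i - 1) / 2)).image (fun t => 2 + 2 * t)) ∪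
      ((Finset.range ((i + 1) / 2)).image (fun t => n - i + 1 + 2 * t))
  else
    ((Finset.range (i / 2)).image (fun t => 1 + 2 * t)) ∪
      ((Finset.range (i / 2)).image (fun t => n - i + 1 + 2 * t))

/-- The `n`-level of `A`: the maximum `i` (with `0 ≤ i ≤ n/2`) such that `Λ_{n,i} ⊆ A`. -/
def level (n : ℕ) (A : Finset ℕ) : ℕ :=
  ((Finset.range (n / 2 + 1)).filter (fun i => Lam n i ⊆ A)).sup id

/-- The `n`-clone of `B`: `core(B) ∪ {n}`. -/
def cloneN (n : ℕ) (B : Finset ℕ) : Finset ℕ := insert n (core B)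

/-- The map `f(X) = core(X) − 1` (subtract one from each element of the core). -/
def fCore (X : Finset ℕ) : Finset ℕ := (core X).image (fun a => a - 1)

/-- The map `g_n(Y) = (Y+1) ∪ {1}` if `n−2 ∈ Y`, and `(Y+1) ∪ {n}` otherwise. -/
def gMap (n : ℕ) (Y : Finset ℕ) : Finset ℕ :=
  if n - 2 ∈ Y then insert 1 (Y.image (· + 1)) else insert n (Y.image (· + 1))

lemma mem_Lam_odd (n i : ℕ) (hi : i % 2 = 1) (hin : i ≤ n) : n ∈ Lam n i := by
  unfold Lam
  rw [if_pos hi]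
  exact Finset.mem_union_right _ (Finset.mem_image.mpr
    ⟨(i - 1) / 2, Finset.mem_range.mpr (by omega), by omega⟩)

lemma one_mem_Lam_even (n i : ℕ) (hi : i % 2 = 0) (h2 : 2 ≤ i) : 1 ∈ Lam n i := by
  unfold Lam
  rw [if_neg (by omega)]
  exact Finset.mem_union_left _ (Finset.mem_image.mpr
    ⟨0, Finset.mem_range.mpr (by omega), by omega⟩)

lemma pred_mem_Lam_even (n i : ℕ) (hi : i % 2 = 0) (h2 : 2 ≤ i) (hin : i ≤ n) :
    n - 1 ∈ Lam n i := by
  unfold Lam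
  rw [if_neg (by omega)]
  exact Finset.mem_union_right _ (Finset.mem_image.mpr
    ⟨i / 2 - 1, Finset.mem_range.mpr (by omega), by omega⟩)

lemma Lam_one_subset (n : ℕ) (hn : 1 ≤ n) (A : Finset ℕ) (h : n ∈ A) : Lam n 1 ⊆ A := by
  intro a ha
  simp [Lam] at ha
  subst ha
  simpa [Nat.sub_add_cancel hn] using h

lemma Lam_two_subset (n : ℕ) (hn : 2 ≤ n) (A : Finset ℕ) (h1 : 1 ∈ A) (h2 : n - 1 ∈ A) :
    Lam n 2 ⊆ A := by
  intro a ha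
  simp [Lam] at ha
  rcases ha with ha | ha <;> subst ha
  · exact h1
  · have : n - 2 + 1 = n - 1 := by omega
    rwa [this]

/-- For `k ≥ 1`, `n ≥ 2k+1` and `A ∈ V(n,k)`, the `n`-level of `A` is `0`
iff `A ∈ V(n−1,k)`. -/
theorem level_zero_iff (k n : ℕ) (hk : 1 ≤ k) (hn : 2 * k + 1 ≤ n)
    (A : Finset ℕ) (hA : A ∈ SchV n k) :
    level n A = 0 ↔ A ∈ SchV (n - 1) k := by
  simp only [SchV, Finset.mem_filter, Finset.mem_powerset] at hA ⊢
  obtain ⟨hsub, hcard, hind⟩ := hA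
  have hn3 : 3 ≤ n := by omega
  rw [level, show (0:ℕ) = ⊥ from rfl, Finset.sup_eq_bot_iff]
  constructor
  · intro h
    have hnA : n ∉ A := by
      intro hmem
      have := h 1 (Finset.mem_filter.mpr ⟨Finset.mem_range.mpr (by omega),
        Lam_one_subset n (by omega) A hmem⟩)
      simpa using this
    have hno : ¬(1 ∈ A ∧ n - 1 ∈ A) := by
      rintro ⟨h1, h2⟩
      rcases Nat.lt_or_ge n 4 with h4 | h4
      · -- n = 3; then 1 ∈ A, 2 ∈ A contradicts independence
        have : n = 3 := by omega
        subst this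
        exact hind 1 h1 (by simpa using h2)
      · have := h 2 (Finset.mem_filter.mpr ⟨Finset.mem_range.mpr (by omega),
          Lam_two_subset n (by omega) A h1 h2⟩)
        simpa using this
    refine ⟨?_, hcard, ?_⟩
    · intro a ha
      have := hsub ha
      simp only [Finset.mem_Icc] at this ⊢
      have : a ≠ n := by rintro rfl; exact hnA ha
      have h' := Finset.mem_Icc.mp (hsub ha)
      omega
    · intro i hi
      have hi' := Finset.mem_Icc.mp (hsub hi)
      have hine : i ≠ n := by rintro rfl; exact hnA hi
      rcases Nat.lt_or_ge i (n - 1) with hlt | hge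
      · have : i % (n - 1) = i := Nat.mod_eq_of_lt hlt
        rw [this]
        have : i % n = i := Nat.mod_eq_of_lt (by omega)
        have := hind i hi
        rwa [Nat.mod_eq_of_lt (by omega)] at this
      · have : i = n - 1 := by omega
        subst this
        rw [Nat.mod_self]
        intro h1
        exact hno ⟨h1, hi⟩
  · rintro ⟨hsub', hcard', hind'⟩ i hif
    obtain ⟨hir, hiss⟩ := Finset.mem_filter.mp hif
    have hir' := Finset.mem_range.mp hir
    by_contra hne
    have h1i : 1 ≤ i := by
      rcases Nat.eq_zero_or_pos i with h | h
      · exact absurd (by simp [h]) hne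
      · exact h
    have hin : i ≤ n := by omega
    rcases Nat.mod_two_eq_zero_or_one i with he | ho
    · -- even, i ≥ 2
      have h2 : 2 ≤ i := by omega
      have h1A : 1 ∈ A := hiss (one_mem_Lam_even n i he h2)
      have hpA : n - 1 ∈ A := hiss (pred_mem_Lam_even n i he h2 hin)
      have := hind' (n - 1) hpA
      rw [Nat.mod_self] at this
      exact this h1A
    · have hnA : n ∈ A := hiss (mem_Lam_odd n i ho hin)
      have := Finset.mem_Icc.mp (hsub' hnA)
      omega
end

section
/- Let k ≥ 1 and n ≥ 2k+1. Define f : V(n,k) → P([n−2]) by f(X) = core(X) − 1 (subtract 1 from each element of core(X)). Then for every X ∈ V(n,k) with n-level at least 1, f(X) ∈ V(n−2,k−1). -/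
open Finset

/-- For `k ≥ 1`, `n ≥ 2k+1` and `X ∈ V(n,k)` with `n`-level at least `1`,
`f(X) = core(X) − 1` belongs to `V(n−2,k−1)`. -/
theorem fCore_mem (k n : ℕ) (hk : 1 ≤ k) (hn : 2 * k + 1 ≤ n)
    (X : Finset ℕ) (hX : X ∈ SchV n k) (hlev : 1 ≤ level n X) :
    fCore X ∈ SchV (n - 2) (k - 1) := by
  simp only [SchV, mem_filter, mem_powerset] at hX
  obtain ⟨hsub, hcard, hind⟩ := hX
  have hn3 : 3 ≤ n := by omega
  have hb : ∀ a ∈ X, 1 ≤ a ∧ a ≤ n := by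
    intro a ha
    have := hsub ha
    simpa [Finset.mem_Icc] using this
  -- extract a witness i for the level
  have hex : ∃ i, 1 ≤ i ∧ i ≤ n / 2 ∧ Lam n i ⊆ X := by
    by_contra h
    push_neg at h
    have hle : level n X ≤ 0 := by
      apply Finset.sup_le
      intro b hbmem
      simp only [Finset.mem_filter, Finset.mem_range] at hbmem
      simp only [id_eq]
      by_contra hb0
      exact (h b (by omega) (by omega)) hbmem.2
    omega
  obtain ⟨i, hi1, hin, hiX⟩ := hex
  have hkey : n ∈ X ∨ (1 ∈ X ∧ n - 1 ∈ X) := by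
    rcases Nat.even_or_odd i with he | ho
    · have hi0 : i % 2 = 0 := Nat.even_iff.mp he
      have hi2 : 2 ≤ i := by omega
      right
      constructor
      · apply hiX
        simp only [Lam, hi0, if_neg (by omega : ¬ (0:ℕ) = 1)]
        apply Finset.mem_union_left
        exact Finset.mem_image.mpr ⟨0, Finset.mem_range.mpr (by omega), by omega⟩
      · apply hiX
        simp only [Lam, hi0, if_neg (by omega : ¬ (0:ℕ) = 1)]
        apply Finset.mem_union_right
        exact Finset.mem_image.mpr ⟨i / 2 - 1, Finset.mem_range.mpr (by omega), by omega⟩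
    · have hi0 : i % 2 = 1 := Nat.odd_iff.mp ho
      left
      apply hiX
      simp only [Lam, hi0, if_pos rfl]
      apply Finset.mem_union_right
      exact Finset.mem_image.mpr ⟨(i + 1) / 2 - 1, Finset.mem_range.mpr (by omega), by omega⟩
  by_cases h1 : 1 ∈ X
  · -- core X = X.erase 1
    have h2 : 2 ∉ X := by
      have := hind 1 h1
      rwa [Nat.mod_eq_of_lt (by omega)] at this
    have hnX : n ∉ X := by
      intro hn'
      have := hind n hn'
      rw [Nat.mod_self] at this
      exact this h1
    have hn1 : n - 1 ∈ X := by
      rcases hkey with h | ⟨_, h⟩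
      · exact absurd h hnX
      · exact h
    have hcore : core X = X.erase 1 := by simp [core, h1]
    have hbnds : ∀ a ∈ X.erase 1, 3 ≤ a ∧ a ≤ n - 1 := by
      intro a ha
      rw [Finset.mem_erase] at ha
      obtain ⟨ha1, haX⟩ := ha
      have := hb a haX
      have ha2 : a ≠ 2 := fun h => h2 (h ▸ haX)
      have han : a ≠ n := fun h => hnX (h ▸ haX)
      omega
    simp only [SchV, mem_filter, mem_powerset, fCore, hcore]
    refine ⟨?_, ?_, ?_⟩
    · intro y hy
      simp only [Finset.mem_image] at hy
      obtain ⟨a, ha, rfl⟩ := hy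
      have := hbnds a ha
      simp only [Finset.mem_Icc]
      omega
    · rw [Finset.card_image_of_injOn, Finset.card_erase_of_mem h1, hcard]
      intro a ha b hbm hab
      have hab' : a - 1 = b - 1 := hab
      have ha' := hbnds a (Finset.mem_coe.mp ha)
      have hb' := hbnds b (Finset.mem_coe.mp hbm)
      omega
    · intro y hy
      simp only [Finset.mem_image] at hy
      obtain ⟨a, ha, rfl⟩ := hy
      have haB := hbnds a ha
      have haX : a ∈ X := (Finset.mem_erase.mp ha).2
      by_cases hc : a ≤ n - 2
      · have hmod : (a - 1) % (n - 2) + 1 = a := by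
          rw [Nat.mod_eq_of_lt (by omega)]; omega
        rw [hmod]
        intro hmem
        simp only [Finset.mem_image] at hmem
        obtain ⟨c, hc1, hce⟩ := hmem
        have hcB := hbnds c hc1
        have hcX : c ∈ X := (Finset.mem_erase.mp hc1).2
        have hceq : c = a + 1 := by omega
        have := hind a haX
        rw [Nat.mod_eq_of_lt (by omega)] at this
        exact this (hceq ▸ hcX)
      · have ha' : a - 1 = n - 2 := by omega
        rw [ha', Nat.mod_self]
        intro hmem
        simp only [Finset.mem_image] at hmem
        obtain ⟨c, hc1, hce⟩ := hmem
        have hcB := hbnds c hc1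
        have hcX : c ∈ X := (Finset.mem_erase.mp hc1).2
        have : c = 2 := by omega
        exact h2 (this ▸ hcX)
  · -- core X = X.erase n
    have hnX : n ∈ X := by
      rcases hkey with h | ⟨h, _⟩
      · exact h
      · exact absurd h h1
    have hn1 : n - 1 ∉ X := by
      intro h
      have := hind (n - 1) h
      rw [Nat.mod_eq_of_lt (by omega)] at this
      have : n ∉ X := by
        have heq : n - 1 + 1 = n := by omega
        rwa [heq] at this
      exact this hnX
    have hsup : X.sup id = n := by
      apply le_antisymm
      · apply Finset.sup_le
        intro a ha
        exact (hb a ha).2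
      · exact Finset.le_sup (f := id) hnX
    have hcore : core X = X.erase n := by
      simp only [core, if_neg h1, hsup]
    have hbnds : ∀ a ∈ X.erase n, 2 ≤ a ∧ a ≤ n - 2 := by
      intro a ha
      rw [Finset.mem_erase] at ha
      obtain ⟨han, haX⟩ := ha
      have := hb a haX
      have ha1 : a ≠ 1 := fun h => h1 (h ▸ haX)
      have ha2 : a ≠ n - 1 := fun h => hn1 (h ▸ haX)
      omega
    simp only [SchV, mem_filter, mem_powerset, fCore, hcore]
    refine ⟨?_, ?_, ?_⟩
    · intro y hy
      simp only [Finset.mem_image] at hy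
      obtain ⟨a, ha, rfl⟩ := hy
      have := hbnds a ha
      simp only [Finset.mem_Icc]
      omega
    · rw [Finset.card_image_of_injOn, Finset.card_erase_of_mem hnX, hcard]
      intro a ha b hbm hab
      have hab' : a - 1 = b - 1 := hab
      have ha' := hbnds a (Finset.mem_coe.mp ha)
      have hb' := hbnds b (Finset.mem_coe.mp hbm)
      omega
    · intro y hy
      simp only [Finset.mem_image] at hy
      obtain ⟨a, ha, rfl⟩ := hy
      have haB := hbnds a ha
      have haX : a ∈ X := (Finset.mem_erase.mp ha).2
      have hmod : (a - 1) % (n - 2) + 1 = a := by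
        rw [Nat.mod_eq_of_lt (by omega)]; omega
      rw [hmod]
      intro hmem
      simp only [Finset.mem_image] at hmem
      obtain ⟨c, hc1, hce⟩ := hmem
      have hcB := hbnds c hc1
      have hcX : c ∈ X := (Finset.mem_erase.mp hc1).2
      have hceq : c = a + 1 := by omega
      have := hind a haX
      rw [Nat.mod_eq_of_lt (by omega)] at this
      exact this (hceq ▸ hcX)
end

section
/- Let k ≥ 2 and n ≥ 2k+1. The map f(X) = core(X) − 1 restricted to V⁺(n,k) is a bijection onto V(n−2,k−1), with inverse g_n given by g_n(Y) = (Y+1) ∪ {1} if n−2 ∈ Y, and g_n(Y) = (Y+1) ∪ {n} otherwise. -/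
open Finset

lemma mem_SchV {n k : ℕ} {A : Finset ℕ} :
    A ∈ SchV n k ↔ A ⊆ Finset.Icc 1 n ∧ A.card = k ∧ ∀ i ∈ A, i % n + 1 ∉ A := by
  simp [SchV, and_assoc]

lemma level_one_iff {n : ℕ} {X : Finset ℕ} (hn : 4 ≤ n) :
    1 ≤ level n X ↔ n ∈ X ∨ (1 ∈ X ∧ n - 1 ∈ X) := by
  constructor
  · intro h
    have hne : ((Finset.range (n / 2 + 1)).filter (fun i => Lam n i ⊆ X)).Nonempty := by
      by_contra hne
      rw [Finset.not_nonempty_iff_eq_empty] at hne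
      simp only [level, hne] at h
      simp at h
    obtain ⟨i, hiS, hieq⟩ := Finset.exists_mem_eq_sup _ hne id
    simp only [level, hieq, id] at h
    simp only [Finset.mem_filter, Finset.mem_range] at hiS
    obtain ⟨hir, hsub⟩ := hiS
    rcases Nat.mod_two_eq_zero_or_one i with hmod | hmod
    · right
      constructor
      · apply hsub
        simp only [Lam, hmod]
        rw [if_neg (by omega)]
        apply Finset.mem_union_left
        simp only [Finset.mem_image, Finset.mem_range]
        exact ⟨0, by omega, by omega⟩
      · apply hsub
        simp only [Lam, hmod]
        rw [if_neg (by omega)]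
        apply Finset.mem_union_right
        simp only [Finset.mem_image, Finset.mem_range]
        exact ⟨i / 2 - 1, by omega, by omega⟩
    · left
      apply hsub
      simp only [Lam, hmod, if_true]
      apply Finset.mem_union_right
      simp only [Finset.mem_image, Finset.mem_range]
      exact ⟨(i - 1) / 2, by omega, by omega⟩
  · intro h
    rcases h with hnX | ⟨h1X, hn1X⟩
    · have h1 : 1 ∈ (Finset.range (n / 2 + 1)).filter (fun i => Lam n i ⊆ X) := by
        simp only [Finset.mem_filter, Finset.mem_range]
        refine ⟨by omega, ?_⟩
        intro x hx
        simp [Lam] at hx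
        have hx' : x = n := by omega
        rwa [hx']
      have := Finset.le_sup (f := id) h1
      simpa [level] using this
    · have h2 : 2 ∈ (Finset.range (n / 2 + 1)).filter (fun i => Lam n i ⊆ X) := by
        simp only [Finset.mem_filter, Finset.mem_range]
        refine ⟨by omega, ?_⟩
        intro x hx
        simp [Lam] at hx
        rcases hx with rfl | hx
        · exact h1X
        · have hx' : x = n - 1 := by omega
          rwa [hx']
      have := Finset.le_sup (f := id) h2
      have h12 : (1:ℕ) ≤ 2 := by omega
      exact le_trans h12 (by simpa [level] using this)

lemma f_section {k n : ℕ} (hk : 2 ≤ k) (hn : 2 * k + 1 ≤ n) {X : Finset ℕ}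
    (hX : X ∈ SchV n k) (hlev : 1 ≤ level n X) :
    fCore X ∈ SchV (n - 2) (k - 1) ∧ gMap n (fCore X) = X := by
  have hn5 : 5 ≤ n := by omega
  rw [mem_SchV] at hX
  obtain ⟨hsub, hcard, hind⟩ := hX
  have hbound : ∀ x ∈ X, 1 ≤ x ∧ x ≤ n := fun x hx => by
    have := hsub hx; simpa [Finset.mem_Icc] using this
  rw [level_one_iff (by omega)] at hlev
  rcases hlev with hnX | ⟨h1X, hn1X⟩
  · -- n ∈ X
    have h1 : 1 ∉ X := by
      have := hind n hnX
      simpa [Nat.mod_self] using this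
    have hn1 : n - 1 ∉ X := by
      intro hc
      have := hind (n-1) hc
      rw [Nat.mod_eq_of_lt (by omega)] at this
      exact this (by rwa [show n - 1 + 1 = n by omega])
    have hcore : fCore X = (X.erase n).image (fun a => a - 1) := by
      simp only [fCore, core, if_neg h1]
      congr 2
      apply le_antisymm
      · exact Finset.sup_le fun x hx => (hbound x hx).2
      · exact Finset.le_sup (f := id) hnX
    have hmem : ∀ y, y ∈ fCore X ↔ y + 1 ∈ X ∧ y ≠ n - 1 := by
      intro y
      rw [hcore]
      simp only [Finset.mem_image, Finset.mem_erase]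
      constructor
      · rintro ⟨a, ⟨han, haX⟩, rfl⟩
        have hba := hbound a haX
        have ha1 : a ≠ 1 := fun h => h1 (h ▸ haX)
        constructor
        · rwa [show a - 1 + 1 = a by omega]
        · intro h; apply han; omega
      · rintro ⟨hy, hyn⟩
        have := hbound _ hy
        exact ⟨y + 1, ⟨by omega, hy⟩, by omega⟩
    have hfmem : ∀ y ∈ fCore X, 1 ≤ y ∧ y ≤ n - 3 := by
      intro y hy
      rw [hmem] at hy
      obtain ⟨hy1, hy2⟩ := hy
      have hb := hbound _ hy1
      have hb1 : y + 1 ≠ 1 := fun h => h1 (h ▸ hy1)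
      have hb2 : y + 1 ≠ n - 1 := fun h => hn1 (h ▸ hy1)
      omega
    have hcard' : (fCore X).card = k - 1 := by
      rw [hcore, Finset.card_image_of_injOn, Finset.card_erase_of_mem hnX, hcard]
      intro a ha b hb hab
      simp only [Finset.coe_erase, Set.mem_diff, Finset.mem_coe] at ha hb
      have h1 := hbound a ha.1
      have h2 := hbound b hb.1
      have hab' : a - 1 = b - 1 := hab
      omega
    have hind' : ∀ i ∈ fCore X, i % (n-2) + 1 ∉ fCore X := by
      intro i hi hc
      have hbi := hfmem i hi
      rw [Nat.mod_eq_of_lt (by omega)] at hc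
      rw [hmem] at hi hc
      have := hind (i+1) hi.1
      rw [Nat.mod_eq_of_lt (by omega)] at this
      exact this hc.1
    refine ⟨mem_SchV.mpr ⟨?_, hcard', hind'⟩, ?_⟩
    · intro y hy
      have := hfmem y hy
      simp only [Finset.mem_Icc]
      omega
    · have hg : n - 2 ∉ fCore X := by
        rw [hmem]
        rintro ⟨hc, -⟩
        exact hn1 (by rwa [show n - 2 + 1 = n - 1 by omega] at hc)
      rw [gMap, if_neg hg]
      ext x
      simp only [Finset.mem_insert, Finset.mem_image]
      constructor
      · rintro (rfl | ⟨y, hy, rfl⟩)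
        · exact hnX
        · exact ((hmem y).1 hy).1
      · intro hx
        by_cases hxn : x = n
        · left; exact hxn
        · right
          have hb := hbound x hx
          have hx1 : x ≠ 1 := fun h => h1 (h ▸ hx)
          exact ⟨x - 1, (hmem _).2 ⟨by rwa [show x - 1 + 1 = x by omega], by omega⟩, by omega⟩
  · -- 1 ∈ X, n - 1 ∈ X
    have hnX : n ∉ X := fun hc => by
      have := hind n hc
      simp [Nat.mod_self] at this
      exact this h1X
    have h2X : 2 ∉ X := by
      have := hind 1 h1X
      rwa [Nat.mod_eq_of_lt (by omega)] at this
    have hcore : fCore X = (X.erase 1).image (fun a => a - 1) := by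
      simp only [fCore, core, if_pos h1X]
    have hmem : ∀ y, y ∈ fCore X ↔ y + 1 ∈ X ∧ 1 ≤ y := by
      intro y
      rw [hcore]
      simp only [Finset.mem_image, Finset.mem_erase]
      constructor
      · rintro ⟨a, ⟨ha1, haX⟩, rfl⟩
        have := hbound a haX
        refine ⟨by rwa [show a - 1 + 1 = a by omega], by omega⟩
      · rintro ⟨hy, hy1⟩
        exact ⟨y + 1, ⟨by omega, hy⟩, by omega⟩
    have hfmem : ∀ y ∈ fCore X, 1 ≤ y ∧ y ≤ n - 2 := by
      intro y hy
      rw [hmem] at hy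
      have := hbound _ hy.1
      have hb : y + 1 ≠ n := fun h => hnX (h ▸ hy.1)
      omega
    have hcard' : (fCore X).card = k - 1 := by
      rw [hcore, Finset.card_image_of_injOn, Finset.card_erase_of_mem h1X, hcard]
      intro a ha b hb hab
      simp only [Finset.coe_erase, Set.mem_diff, Finset.mem_coe] at ha hb
      have h1 := hbound a ha.1
      have h2 := hbound b hb.1
      have hab' : a - 1 = b - 1 := hab
      omega
    have hind' : ∀ i ∈ fCore X, i % (n-2) + 1 ∉ fCore X := by
      intro i hi hc
      have hbi := hfmem i hi
      by_cases hieq : i = n - 2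
      · rw [hieq, Nat.mod_self] at hc
        rw [hmem] at hc
        exact h2X hc.1
      · rw [Nat.mod_eq_of_lt (by omega)] at hc
        rw [hmem] at hi hc
        have := hind (i+1) hi.1
        rw [Nat.mod_eq_of_lt (by omega)] at this
        exact this hc.1
    refine ⟨mem_SchV.mpr ⟨?_, hcard', hind'⟩, ?_⟩
    · intro y hy
      have := hfmem y hy
      simp only [Finset.mem_Icc]
      omega
    · have hg : n - 2 ∈ fCore X :=
        (hmem _).2 ⟨by rw [show n - 2 + 1 = n - 1 by omega]; exact hn1X, by omega⟩
      rw [gMap, if_pos hg]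
      ext x
      simp only [Finset.mem_insert, Finset.mem_image]
      constructor
      · rintro (rfl | ⟨y, hy, rfl⟩)
        · exact h1X
        · exact ((hmem y).1 hy).1
      · intro hx
        by_cases hx1 : x = 1
        · left; exact hx1
        · right
          have hb := hbound x hx
          exact ⟨x - 1, (hmem _).2 ⟨by rwa [show x - 1 + 1 = x by omega], by omega⟩, by omega⟩

lemma g_section {k n : ℕ} (hk : 2 ≤ k) (hn : 2 * k + 1 ≤ n) {Y : Finset ℕ}
    (hY : Y ∈ SchV (n - 2) (k - 1)) :
    gMap n Y ∈ SchV n k ∧ 1 ≤ level n (gMap n Y) ∧ fCore (gMap n Y) = Y := by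
  have hn5 : 5 ≤ n := by omega
  rw [mem_SchV] at hY
  obtain ⟨hsub, hcard, hind⟩ := hY
  have hbound : ∀ y ∈ Y, 1 ≤ y ∧ y ≤ n - 2 := fun y hy => by
    have := hsub hy; simpa [Finset.mem_Icc] using this
  by_cases hY2 : n - 2 ∈ Y
  · have h1Y : 1 ∉ Y := by
      have := hind (n-2) hY2
      simpa [Nat.mod_self] using this
    have hgdef : gMap n Y = insert 1 (Y.image (· + 1)) := by rw [gMap, if_pos hY2]
    have h1im : (1:ℕ) ∉ Y.image (· + 1) := by
      simp only [Finset.mem_image]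
      rintro ⟨y, hy, hy1⟩
      have := hbound y hy; omega
    have hmem : ∀ x, x ∈ gMap n Y ↔ x = 1 ∨ (2 ≤ x ∧ x - 1 ∈ Y) := by
      intro x
      rw [hgdef]
      simp only [Finset.mem_insert, Finset.mem_image]
      constructor
      · rintro (rfl | ⟨y, hy, rfl⟩)
        · left; rfl
        · right; have := hbound y hy; exact ⟨by omega, by simpa using hy⟩
      · rintro (rfl | ⟨hx2, hx⟩)
        · left; rfl
        · right; exact ⟨x - 1, hx, by omega⟩
    refine ⟨mem_SchV.mpr ⟨?_, ?_, ?_⟩, ?_, ?_⟩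
    · intro x hx
      rw [hmem] at hx
      simp only [Finset.mem_Icc]
      rcases hx with rfl | ⟨hx2, hx⟩
      · omega
      · have := hbound _ hx; omega
    · rw [hgdef, Finset.card_insert_of_notMem h1im,
        Finset.card_image_of_injective _ (add_left_injective 1), hcard]
      omega
    · intro i hi hc
      rw [hmem] at hi hc
      rcases hi with rfl | ⟨hi2, hiY⟩
      · rw [Nat.mod_eq_of_lt (by omega)] at hc
        rcases hc with h | ⟨-, h⟩
        · omega
        · exact h1Y (by simpa using h)
      · have hbi := hbound _ hiY
        rw [Nat.mod_eq_of_lt (by omega)] at hc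
        rcases hc with h | ⟨-, h⟩
        · omega
        · have h' : i ∈ Y := by simpa using h
          have hbh := hbound _ h'
          by_cases hcase : i - 1 = n - 2
          · omega
          · have := hind (i-1) hiY
            rw [Nat.mod_eq_of_lt (by omega)] at this
            exact this (by rwa [show i - 1 + 1 = i by omega])
    · rw [level_one_iff (by omega)]
      right
      refine ⟨(hmem 1).2 (Or.inl rfl), (hmem (n-1)).2 (Or.inr ⟨by omega, ?_⟩)⟩
      rwa [show n - 1 - 1 = n - 2 by omega]
    · rw [hgdef]
      simp only [fCore, core, if_pos (Finset.mem_insert_self 1 _),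
        Finset.erase_insert h1im, Finset.image_image]
      ext y
      simp
  · have hgdef : gMap n Y = insert n (Y.image (· + 1)) := by rw [gMap, if_neg hY2]
    have hbound' : ∀ y ∈ Y, 1 ≤ y ∧ y ≤ n - 3 := fun y hy => by
      have h1 := hbound y hy
      have h2 : y ≠ n - 2 := fun h => hY2 (h ▸ hy)
      omega
    have hnim : n ∉ Y.image (· + 1) := by
      simp only [Finset.mem_image]
      rintro ⟨y, hy, hyn⟩
      have := hbound' y hy; omega
    have hmem : ∀ x, x ∈ gMap n Y ↔ x = n ∨ (2 ≤ x ∧ x - 1 ∈ Y) := by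
      intro x
      rw [hgdef]
      simp only [Finset.mem_insert, Finset.mem_image]
      constructor
      · rintro (rfl | ⟨y, hy, rfl⟩)
        · left; rfl
        · right; have := hbound y hy; exact ⟨by omega, by simpa using hy⟩
      · rintro (rfl | ⟨hx2, hx⟩)
        · left; rfl
        · right; exact ⟨x - 1, hx, by omega⟩
    refine ⟨mem_SchV.mpr ⟨?_, ?_, ?_⟩, ?_, ?_⟩
    · intro x hx
      rw [hmem] at hx
      simp only [Finset.mem_Icc]
      rcases hx with rfl | ⟨hx2, hx⟩
      · omega
      · have := hbound _ hx; omega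
    · rw [hgdef, Finset.card_insert_of_notMem hnim,
        Finset.card_image_of_injective _ (add_left_injective 1), hcard]
      omega
    · intro i hi hc
      rw [hmem] at hi hc
      rcases hi with rfl | ⟨hi2, hiY⟩
      · rw [Nat.mod_self] at hc
        rcases hc with h | ⟨h, -⟩ <;> omega
      · have hbi := hbound' _ hiY
        rw [Nat.mod_eq_of_lt (by omega)] at hc
        rcases hc with h | ⟨-, h⟩
        · omega
        · have h' : i ∈ Y := by simpa using h
          have := hind (i-1) hiY
          rw [Nat.mod_eq_of_lt (by omega)] at this
          exact this (by rwa [show i - 1 + 1 = i by omega])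
    · rw [level_one_iff (by omega)]
      left
      exact (hmem n).2 (Or.inl rfl)
    · have h1g : 1 ∉ gMap n Y := by
        rw [hmem]
        rintro (h | ⟨h, -⟩) <;> omega
      have hsup : (gMap n Y).sup id = n := by
        apply le_antisymm
        · apply Finset.sup_le
          intro x hx
          rw [hmem] at hx
          rcases hx with rfl | ⟨-, hx⟩
          · exact le_refl _
          · have := hbound _ hx
            simp only [id]
            omega
        · exact Finset.le_sup (f := id) ((hmem n).2 (Or.inl rfl))
      simp only [fCore, core, if_neg h1g, hsup]
      rw [hgdef, Finset.erase_insert hnim, Finset.image_image]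
      ext y
      simp

/-- For `k ≥ 2` and `n ≥ 2k+1`, `f(X) = core(X) − 1` restricted to
`V⁺(n,k)` is a bijection onto `V(n−2,k−1)` with inverse `g_n`. -/
theorem fCore_bijOn (k n : ℕ) (hk : 2 ≤ k) (hn : 2 * k + 1 ≤ n) :
    Set.BijOn fCore {X | X ∈ SchV n k ∧ 1 ≤ level n X}
      {Y | Y ∈ SchV (n - 2) (k - 1)} ∧
    (∀ X, X ∈ SchV n k → 1 ≤ level n X → gMap n (fCore X) = X) ∧
    (∀ Y, Y ∈ SchV (n - 2) (k - 1) → fCore (gMap n Y) = Y) := by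
  refine ⟨⟨?_, ?_, ?_⟩, ?_, ?_⟩
  · rintro X ⟨hX, hlev⟩
    exact (f_section hk hn hX hlev).1
  · rintro X1 ⟨hX1, hl1⟩ X2 ⟨hX2, hl2⟩ heq
    have e1 := (f_section hk hn hX1 hl1).2
    have e2 := (f_section hk hn hX2 hl2).2
    rw [← e1, heq, e2]
  · rintro Y hY
    obtain ⟨h1, h2, h3⟩ := g_section hk hn hY
    exact ⟨gMap n Y, ⟨h1, h2⟩, h3⟩
  · intro X hX hl
    exact (f_section hk hn hX hl).2
  · intro Y hY
    exact (g_section hk hn hY).2.2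
end

section
/- Let k ≥ 2 and n ≥ 2k+1. Any two distinct sets A, B ∈ V⁺(n,k) (k-subsets of [n] independent in C_n whose n-level is at least 1) have distinct cores: core(A) ≠ core(B). -/
open Finset

lemma mem_key (n : ℕ) (A : Finset ℕ) (hA' : 1 ≤ level n A) :
    n ∈ A ∨ (1 ∈ A ∧ n - 1 ∈ A) := by
  rw [level] at hA'
  obtain ⟨i, hi, hi1⟩ := (Finset.le_sup_iff (by norm_num : (0:ℕ) < 1)).mp hA'
  simp only [mem_filter, mem_range] at hi
  obtain ⟨hilt, hsub⟩ := hi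
  have hi1' : 1 ≤ i := hi1
  have hin : i ≤ n := le_trans (Nat.lt_succ_iff.mp hilt) (Nat.div_le_self n 2)
  rcases Nat.even_or_odd i with he | ho
  · right
    obtain ⟨m, hm⟩ := he
    have hm2 : i = 2 * m := by omega
    have h2 : i % 2 = 0 := by omega
    constructor
    · apply hsub
      rw [Lam, if_neg (by omega)]
      apply mem_union_left
      simp only [mem_image, mem_range]
      exact ⟨0, by omega, by omega⟩
    · apply hsub
      rw [Lam, if_neg (by omega)]
      apply mem_union_right
      simp only [mem_image, mem_range]
      exact ⟨m - 1, by omega, by omega⟩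
  · left
    obtain ⟨m, hm⟩ := ho
    apply hsub
    rw [Lam, if_pos (by omega)]
    apply mem_union_right
    simp only [mem_image, mem_range]
    exact ⟨m, by omega, by omega⟩


/-- For `k ≥ 2`, `n ≥ 2k+1`, distinct sets in `V⁺(n,k)` have
distinct cores. -/
theorem cores_distinct (k n : ℕ) (hk : 2 ≤ k) (hn : 2 * k + 1 ≤ n)
    (A B : Finset ℕ) (hA : A ∈ SchV n k) (hA' : 1 ≤ level n A)
    (hB : B ∈ SchV n k) (hB' : 1 ≤ level n B) (hne : A ≠ B) :
    core A ≠ core B := by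
  have hn5 : 5 ≤ n := by omega
  simp only [SchV, mem_filter, mem_powerset] at hA hB
  obtain ⟨hAsub, hAcard, hAind⟩ := hA
  obtain ⟨hBsub, hBcard, hBind⟩ := hB
  have hAkey := mem_key n A hA'
  have hBkey := mem_key n B hB'
  -- exclusivity
  have exclA : n ∈ A → 1 ∉ A := by
    intro h
    have := hAind n h
    rwa [Nat.mod_self] at this
  have exclB : n ∈ B → 1 ∉ B := by
    intro h
    have := hBind n h
    rwa [Nat.mod_self] at this
  -- sup = n when n ∈ X
  have supA : n ∈ A → A.sup id = n := fun h =>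
    le_antisymm (Finset.sup_le fun b hb => (Finset.mem_Icc.mp (hAsub hb)).2)
      (Finset.le_sup (f := id) h)
  have supB : n ∈ B → B.sup id = n := fun h =>
    le_antisymm (Finset.sup_le fun b hb => (Finset.mem_Icc.mp (hBsub hb)).2)
      (Finset.le_sup (f := id) h)
  intro hcore
  rcases hAkey with hAn | ⟨hA1, hA1'⟩ <;> rcases hBkey with hBn | ⟨hB1, hB1'⟩
  · -- both contain n
    rw [core, core, if_neg (exclA hAn), if_neg (exclB hBn), supA hAn, supB hBn] at hcore
    apply hne
    have : insert n (A.erase n) = insert n (B.erase n) := by rw [hcore]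
    rwa [Finset.insert_erase hAn, Finset.insert_erase hBn] at this
  · -- n ∈ A, 1 ∈ B (so n ∉ B since 1 ∈ B and indep: n∈B → 1∉B)
    have hBnn : n ∉ B := fun h => exclB h hB1
    rw [core, core, if_neg (exclA hAn), if_pos hB1, supA hAn] at hcore
    -- n-1 ∈ B, n-1 ≠ 1, so n-1 ∈ B.erase 1 = A.erase n ⊆ A
    have h1 : n - 1 ∈ A := by
      have : n - 1 ∈ B.erase 1 := Finset.mem_erase.mpr ⟨by omega, hB1'⟩
      rw [← hcore] at this
      exact Finset.erase_subset _ _ this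
    have hcontr := hAind (n - 1) h1
    rw [Nat.mod_eq_of_lt (by omega)] at hcontr
    apply hcontr
    have hEq : n - 1 + 1 = n := by omega
    rw [hEq]; exact hAn
  · -- 1 ∈ A, n ∈ B
    have hAnn : n ∉ A := fun h => exclA h hA1
    rw [core, core, if_pos hA1, if_neg (exclB hBn), supB hBn] at hcore
    have h1 : n - 1 ∈ B := by
      have : n - 1 ∈ A.erase 1 := Finset.mem_erase.mpr ⟨by omega, hA1'⟩
      rw [hcore] at this
      exact Finset.erase_subset _ _ this
    have hcontr := hBind (n - 1) h1
    rw [Nat.mod_eq_of_lt (by omega)] at hcontr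
    apply hcontr
    have hEq : n - 1 + 1 = n := by omega
    rw [hEq]; exact hBn
  · -- both contain 1
    rw [core, core, if_pos hA1, if_pos hB1] at hcore
    apply hne
    have : insert 1 (A.erase 1) = insert 1 (B.erase 1) := by rw [hcore]
    rwa [Finset.insert_erase hA1, Finset.insert_erase hB1] at this
end

section
/- Let k ≥ 2, n ≥ 2k+1, and let A, B ∈ V⁺(n,k) with f(A) and f(B) disjoint, where f(X) = core(X) − 1. If n−2 ∈ f(A) or n−2 ∈ f(B), then A and B are disjoint. -/
open Finset

lemma level_cases {n : ℕ} {A : Finset ℕ} (hn5 : 5 ≤ n) (h : 1 ≤ level n A) :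
    n ∈ A ∨ (1 ∈ A ∧ n - 1 ∈ A) := by
  rw [level, Finset.le_sup_iff (by norm_num : (0:ℕ) < 1)] at h
  obtain ⟨i, hi, h1⟩ := h
  rw [Finset.mem_filter, Finset.mem_range] at hi
  obtain ⟨hir, hsub⟩ := hi
  simp only [id] at h1
  rcases Nat.even_or_odd i with he | ho
  · right
    have h2 : i % 2 = 0 := Nat.even_iff.mp he
    constructor
    · apply hsub
      rw [Lam, if_neg (by omega)]
      apply Finset.mem_union_left
      simp only [Finset.mem_image, Finset.mem_range]
      exact ⟨0, by omega, by omega⟩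
    · apply hsub
      rw [Lam, if_neg (by omega)]
      apply Finset.mem_union_right
      simp only [Finset.mem_image, Finset.mem_range]
      exact ⟨i / 2 - 1, by omega, by omega⟩
  · left
    have h2 : i % 2 = 1 := Nat.odd_iff.mp ho
    apply hsub
    rw [Lam, if_pos h2]
    apply Finset.mem_union_right
    simp only [Finset.mem_image, Finset.mem_range]
    exact ⟨(i - 1) / 2, by omega, by omega⟩

lemma main_aux {k n : ℕ} (hk : 2 ≤ k) (hn : 2 * k + 1 ≤ n) {A B : Finset ℕ}
    (hA : A ∈ SchV n k) (hA' : 1 ≤ level n A)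
    (hB : B ∈ SchV n k) (hB' : 1 ≤ level n B)
    (hdisj : Disjoint (fCore A) (fCore B))
    (hmem : n - 2 ∈ fCore A) : Disjoint A B := by
  have hn5 : 5 ≤ n := by omega
  rw [SchV, Finset.mem_filter, Finset.mem_powerset] at hA hB
  obtain ⟨hAsub, _, hindA⟩ := hA
  obtain ⟨hBsub, _, hindB⟩ := hB
  have hcoreA : core A ⊆ A := by unfold core; split <;> exact Finset.erase_subset _ _
  have hcoreB : core B ⊆ B := by unfold core; split <;> exact Finset.erase_subset _ _
  -- n - 1 ∈ A
  obtain ⟨a, ha, hae⟩ := Finset.mem_image.mp hmem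
  have haA : a ∈ A := hcoreA ha
  have h1a : 1 ≤ a := (Finset.mem_Icc.mp (hAsub haA)).1
  have han : a = n - 1 := by omega
  have hn1A : n - 1 ∈ A := han ▸ haA
  -- n ∉ A
  have hnA : n ∉ A := by
    have h := hindA (n - 1) hn1A
    rwa [Nat.mod_eq_of_lt (by omega), (by omega : n - 1 + 1 = n)] at h
  -- 1 ∈ A
  rcases level_cases hn5 hA' with h | ⟨h1A, _⟩
  · exact absurd h hnA
  rcases level_cases hn5 hB' with hnB | ⟨h1B, hn1B⟩
  · -- n ∈ B
    have h1B : 1 ∉ B := by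
      have h := hindB n hnB
      rwa [Nat.mod_self] at h
    have hsupB : B.sup id = n :=
      le_antisymm (Finset.sup_le fun b hb => (Finset.mem_Icc.mp (hBsub hb)).2)
        (Finset.le_sup (f := id) hnB)
    have hcA : core A = A.erase 1 := by rw [core, if_pos h1A]
    have hcB : core B = B.erase n := by rw [core, if_neg h1B, hsupB]
    rw [Finset.disjoint_left]
    intro x hxA hxB
    have hx1 : x ≠ 1 := fun h => h1B (h ▸ hxB)
    have hxn : x ≠ n := fun h => hnA (h ▸ hxA)
    have hfA : x - 1 ∈ fCore A := by
      rw [fCore, hcA]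
      exact Finset.mem_image.mpr ⟨x, Finset.mem_erase.mpr ⟨hx1, hxA⟩, rfl⟩
    have hfB : x - 1 ∈ fCore B := by
      rw [fCore, hcB]
      exact Finset.mem_image.mpr ⟨x, Finset.mem_erase.mpr ⟨hxn, hxB⟩, rfl⟩
    exact Finset.disjoint_left.mp hdisj hfA hfB
  · -- 1 ∈ B and n - 1 ∈ B : contradiction with disjointness
    exfalso
    have hcB : core B = B.erase 1 := by rw [core, if_pos h1B]
    have hfB : n - 2 ∈ fCore B := by
      rw [fCore, hcB]
      exact Finset.mem_image.mpr ⟨n - 1, Finset.mem_erase.mpr ⟨by omega, hn1B⟩, by omega⟩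
    exact Finset.disjoint_left.mp hdisj hmem hfB

/-- For `k ≥ 2`, `n ≥ 2k+1` and `A, B ∈ V⁺(n,k)` with `f(A)`, `f(B)`
disjoint, if `n−2` belongs to `f(A)` or to `f(B)` then `A` and `B` are disjoint. -/
theorem disjoint_of_fCore (k n : ℕ) (hk : 2 ≤ k) (hn : 2 * k + 1 ≤ n)
    (A B : Finset ℕ) (hA : A ∈ SchV n k) (hA' : 1 ≤ level n A)
    (hB : B ∈ SchV n k) (hB' : 1 ≤ level n B)
    (hdisj : Disjoint (fCore A) (fCore B))
    (hmem : n - 2 ∈ fCore A ∨ n - 2 ∈ fCore B) :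
    Disjoint A B := by
  rcases hmem with h | h
  · exact main_aux hk hn hA hA' hB hB' hdisj h
  · exact (main_aux hk hn hB hB' hA hA' hdisj.symm h).symm
end

section
/- Let k ≥ 2 and n ≥ 2k+1. The restriction of f(X) = core(X) − 1 to the set {clone_n(B) : B ∈ V⁺(n−1,k)} is a bijection onto V(n−3,k−1). -/
open Finset

lemma Lam_one {m : ℕ} (hm : 1 ≤ m) : Lam m 1 = {m} := by
  ext a; simp [Lam]; omega

lemma Lam_two {m : ℕ} (hm : 2 ≤ m) : Lam m 2 = {1, m - 1} := by
  ext a; simp [Lam, Finset.range_one]; omega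

lemma mem_Lam_odd_s15 {m i : ℕ} (h1 : i % 2 = 1) (h2 : i ≤ m) : m ∈ Lam m i := by
  rw [Lam, if_pos h1]
  simp only [Finset.mem_union, Finset.mem_image, Finset.mem_range]
  exact Or.inr ⟨(i - 1) / 2, by omega, by omega⟩

lemma mem_Lam_even {m i : ℕ} (h1 : i % 2 = 0) (h2 : 2 ≤ i) (h3 : i ≤ m) :
    1 ∈ Lam m i ∧ m - 1 ∈ Lam m i := by
  rw [Lam, if_neg (by omega)]
  simp only [Finset.mem_union, Finset.mem_image, Finset.mem_range]
  exact ⟨Or.inl ⟨0, by omega, by omega⟩, Or.inr ⟨i / 2 - 1, by omega, by omega⟩⟩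

lemma level_ge_one_iff {m : ℕ} {B : Finset ℕ} :
    1 ≤ level m B ↔ ∃ i, 1 ≤ i ∧ i ≤ m / 2 ∧ Lam m i ⊆ B := by
  constructor
  · intro h
    by_contra hc
    push_neg at hc
    have hle : ((Finset.range (m / 2 + 1)).filter (fun i => Lam m i ⊆ B)).sup id ≤ 0 := by
      apply Finset.sup_le
      intro i hi
      simp only [Finset.mem_filter, Finset.mem_range] at hi
      simp only [id_eq]
      by_contra h0
      exact hc i (by omega) (by omega) hi.2
    simp only [level] at h
    omega
  · rintro ⟨i, h1, h2, hsub⟩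
    have hmem : i ∈ (Finset.range (m / 2 + 1)).filter (fun j => Lam m j ⊆ B) :=
      Finset.mem_filter.mpr ⟨Finset.mem_range.mpr (by omega), hsub⟩
    have h3 := Finset.le_sup (f := id) hmem
    simp only [level, id_eq] at h3 ⊢
    omega

lemma core_clone_props {n k : ℕ} (hk : 2 ≤ k) (hn : 2 * k + 1 ≤ n) {B : Finset ℕ}
    (hB : B ∈ SchV (n - 1) k) (hlev : 1 ≤ level (n - 1) B) :
    core B ⊆ Finset.Icc 2 (n - 2) ∧ (core B).card = k - 1 ∧
      (∀ a ∈ core B, a + 1 ∉ core B) ∧ (2 ∈ core B → n - 2 ∉ core B) := by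
  have hn5 : 5 ≤ n := by omega
  obtain ⟨hsub, hcard, hind⟩ := mem_SchV.mp hB
  obtain ⟨i, hi1, hi2, hlam⟩ := level_ge_one_iff.mp hlev
  have hdisj : n - 1 ∈ B ∨ (1 ∈ B ∧ n - 2 ∈ B) := by
    rcases Nat.mod_two_eq_zero_or_one i with h | h
    · right
      obtain ⟨ha, hb⟩ := mem_Lam_even (m := n - 1) h (by omega) (by omega)
      refine ⟨hlam ha, ?_⟩
      have := hlam hb
      rwa [show n - 1 - 1 = n - 2 by omega] at this
    · left
      exact hlam (mem_Lam_odd_s15 h (by omega))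
  -- establish core facts
  have key : core B ⊆ B ∧ 1 ∉ core B ∧ n - 1 ∉ core B ∧ (core B).card = k - 1 ∧
      (2 ∈ core B → n - 2 ∉ core B) := by
    by_cases hmem : n - 1 ∈ B
    · have h1B : 1 ∉ B := by
        have h := hind (n - 1) hmem
        rwa [Nat.mod_self, Nat.zero_add] at h
      have hsup : B.sup id = n - 1 := by
        refine le_antisymm (Finset.sup_le fun a ha => ?_) (Finset.le_sup (f := id) hmem)
        have := Finset.mem_Icc.mp (hsub ha)
        simp only [id_eq]; omega
      have hcore : core B = B.erase (n - 1) := by rw [core, if_neg h1B, hsup]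
      rw [hcore]
      refine ⟨Finset.erase_subset _ _, fun h => h1B (Finset.mem_erase.mp h).2,
        fun h => (Finset.mem_erase.mp h).1 rfl, ?_, ?_⟩
      · rw [Finset.card_erase_of_mem hmem, hcard]
      · intro _ hc
        have hc2 := (Finset.mem_erase.mp hc).2
        have h := hind (n - 2) hc2
        rw [Nat.mod_eq_of_lt (by omega), show n - 2 + 1 = n - 1 by omega] at h
        exact h hmem
    · obtain ⟨h1B, hn2B⟩ := hdisj.resolve_left hmem
      have hcore : core B = B.erase 1 := by rw [core, if_pos h1B]
      rw [hcore]
      refine ⟨Finset.erase_subset _ _, fun h => (Finset.mem_erase.mp h).1 rfl,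
        fun h => hmem (Finset.mem_erase.mp h).2, ?_, ?_⟩
      · rw [Finset.card_erase_of_mem h1B, hcard]
      · intro h2 _
        have h2B := (Finset.mem_erase.mp h2).2
        have h := hind 1 h1B
        rw [Nat.mod_eq_of_lt (by omega)] at h
        exact h h2B
  obtain ⟨hCB, h1C, hn1C, hcardC, h2C⟩ := key
  have hsubC : core B ⊆ Finset.Icc 2 (n - 2) := by
    intro a ha
    have haB := hCB ha
    have := Finset.mem_Icc.mp (hsub haB)
    have ha1 : a ≠ 1 := fun h => h1C (h ▸ ha)
    have han1 : a ≠ n - 1 := fun h => hn1C (h ▸ ha)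
    simp only [Finset.mem_Icc]; omega
  refine ⟨hsubC, hcardC, ?_, h2C⟩
  intro a ha hc
  have haI := Finset.mem_Icc.mp (hsubC ha)
  have h := hind a (hCB ha)
  rw [Nat.mod_eq_of_lt (by omega)] at h
  exact h (hCB hc)

lemma core_insert_top {n : ℕ} {C : Finset ℕ} (hC : C ⊆ Finset.Icc 2 (n - 2)) (hn : 5 ≤ n) :
    core (insert n C) = C := by
  have h1 : 1 ∉ insert n C := by
    simp only [Finset.mem_insert]
    rintro (h | h)
    · omega
    · have := Finset.mem_Icc.mp (hC h); omega
  have hnC : n ∉ C := fun h => by have := Finset.mem_Icc.mp (hC h); omega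
  have hsup : (insert n C).sup id = n := by
    refine le_antisymm (Finset.sup_le fun a ha => ?_) (Finset.le_sup (f := id) (Finset.mem_insert_self _ _))
    simp only [Finset.mem_insert] at ha
    rcases ha with rfl | h
    · simp
    · have := Finset.mem_Icc.mp (hC h); simp only [id_eq]; omega
  rw [core, if_neg h1, hsup, Finset.erase_insert hnC]

lemma image_mem_SchV {n k : ℕ} {C : Finset ℕ} (hn : 5 ≤ n)
    (hC : C ⊆ Finset.Icc 2 (n - 2)) (hcard : C.card = k - 1)
    (hind : ∀ a ∈ C, a + 1 ∉ C) (h2 : 2 ∈ C → n - 2 ∉ C) :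
    C.image (fun a => a - 1) ∈ SchV (n - 3) (k - 1) := by
  rw [mem_SchV]
  refine ⟨?_, ?_, ?_⟩
  · intro x hx
    simp only [Finset.mem_image] at hx
    obtain ⟨a, ha, rfl⟩ := hx
    have := Finset.mem_Icc.mp (hC ha)
    simp only [Finset.mem_Icc]; omega
  · rw [Finset.card_image_of_injOn, hcard]
    intro a ha b hb h
    have h1 := Finset.mem_Icc.mp (hC ha)
    have h2 := Finset.mem_Icc.mp (hC hb)
    have h3 : a - 1 = b - 1 := h
    omega
  · intro j hj hcontra
    simp only [Finset.mem_image] at hj hcontra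
    obtain ⟨a, ha, rfl⟩ := hj
    obtain ⟨b, hb, hbe⟩ := hcontra
    have haI := Finset.mem_Icc.mp (hC ha)
    have hbI := Finset.mem_Icc.mp (hC hb)
    by_cases hlt : a < n - 2
    · rw [Nat.mod_eq_of_lt (by omega)] at hbe
      have hba : b = a + 1 := by omega
      exact hind a ha (hba ▸ hb)
    · have haeq : a = n - 2 := by omega
      rw [show a - 1 = n - 3 by omega, Nat.mod_self] at hbe
      have hb2 : b = 2 := by omega
      exact h2 (hb2 ▸ hb) (haeq ▸ ha)

lemma gMap_props {n k : ℕ} (hk : 2 ≤ k) (hn : 2 * k + 1 ≤ n) {Y : Finset ℕ}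
    (hY : Y ∈ SchV (n - 3) (k - 1)) :
    gMap (n - 1) Y ∈ SchV (n - 1) k ∧ 1 ≤ level (n - 1) (gMap (n - 1) Y) ∧
      fCore (cloneN n (gMap (n - 1) Y)) = Y := by
  have hn5 : 5 ≤ n := by omega
  obtain ⟨hsubY, hcardY, hindY⟩ := mem_SchV.mp hY
  set S : Finset ℕ := Y.image (· + 1) with hS
  have hmemS : ∀ b, b ∈ S ↔ ∃ a ∈ Y, a + 1 = b := by
    intro b; simp [hS]
  have hYIcc : ∀ a ∈ Y, 1 ≤ a ∧ a ≤ n - 3 := by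
    intro a ha; exact Finset.mem_Icc.mp (hsubY ha)
  have hSIcc : ∀ b ∈ S, 2 ≤ b ∧ b ≤ n - 2 := by
    intro b hb
    obtain ⟨a, ha, rfl⟩ := (hmemS b).mp hb
    have := hYIcc a ha; omega
  have h1S : 1 ∉ S := fun h => by have := hSIcc 1 h; omega
  have hScard : S.card = k - 1 := by
    rw [hS, Finset.card_image_of_injOn, hcardY]
    intro a _ b _ h
    have : a + 1 = b + 1 := h
    omega
  have hfinal : ∀ B : Finset ℕ, core B = S → fCore (cloneN n B) = Y := by
    intro B hcB
    have hSsub : S ⊆ Finset.Icc 2 (n - 2) := by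
      intro b hb; have := hSIcc b hb; simp only [Finset.mem_Icc]; omega
    have h2 : core (insert n S) = S := core_insert_top hSsub hn5
    rw [fCore, cloneN, hcB, h2, hS, Finset.image_image]
    ext a
    simp
  have hcond : n - 1 - 2 = n - 3 := by omega
  by_cases htop : n - 3 ∈ Y
  · have hBeq : gMap (n - 1) Y = insert 1 S := by
      rw [gMap, hcond, if_pos htop]
    have h1notY : 1 ∉ Y := by
      have h := hindY (n - 3) htop
      rwa [Nat.mod_self, Nat.zero_add] at h
    have hcoreB : core (insert 1 S) = S := by
      rw [core, if_pos (Finset.mem_insert_self _ _), Finset.erase_insert h1S]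
    refine ⟨?_, ?_, ?_⟩
    · rw [hBeq, mem_SchV]
      refine ⟨?_, ?_, ?_⟩
      · intro x hx
        rcases Finset.mem_insert.mp hx with rfl | h
        · simp only [Finset.mem_Icc]; omega
        · have := hSIcc x h; simp only [Finset.mem_Icc]; omega
      · rw [Finset.card_insert_of_notMem h1S, hScard]; omega
      · intro x hx hcon
        rcases Finset.mem_insert.mp hx with rfl | h
        · rw [Nat.mod_eq_of_lt (show 1 < n - 1 by omega)] at hcon
          rcases Finset.mem_insert.mp hcon with h | h
          · omega
          · obtain ⟨a, ha, hae⟩ := (hmemS _).mp h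
            have : a = 1 := by omega
            exact h1notY (this ▸ ha)
        · obtain ⟨a, ha, rfl⟩ := (hmemS _).mp h
          have haI := hYIcc a ha
          rw [Nat.mod_eq_of_lt (show a + 1 < n - 1 by omega)] at hcon
          rcases Finset.mem_insert.mp hcon with h' | h'
          · omega
          · obtain ⟨b, hb, hbe⟩ := (hmemS _).mp h'
            have hbI := hYIcc b hb
            have hba : b = a + 1 := by omega
            have h := hindY a ha
            rw [Nat.mod_eq_of_lt (show a < n - 3 by omega)] at h
            exact h (hba ▸ hb)
    · apply level_ge_one_iff.mpr
      refine ⟨2, by omega, by omega, ?_⟩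
      rw [Lam_two (show 2 ≤ n - 1 by omega), hBeq]
      intro x hx
      rcases Finset.mem_insert.mp hx with rfl | hx'
      · exact Finset.mem_insert_self _ _
      · have hx2 : x = n - 1 - 1 := Finset.mem_singleton.mp hx'
        refine Finset.mem_insert_of_mem ((hmemS _).mpr ⟨n - 3, htop, by omega⟩)
    · rw [hBeq]
      exact hfinal _ hcoreB
  · have hBeq : gMap (n - 1) Y = insert (n - 1) S := by
      rw [gMap, hcond, if_neg htop]
    have hSIcc2 : ∀ b ∈ S, 2 ≤ b ∧ b ≤ n - 3 := by
      intro b hb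
      obtain ⟨a, ha, rfl⟩ := (hmemS b).mp hb
      have := hYIcc a ha
      have : a ≠ n - 3 := fun h => htop (h ▸ ha)
      omega
    have hn1S : n - 1 ∉ S := fun h => by have := hSIcc2 _ h; omega
    have h1B : 1 ∉ insert (n - 1) S := by
      simp only [Finset.mem_insert]
      rintro (h | h)
      · omega
      · exact h1S h
    have hsupB : (insert (n - 1) S).sup id = n - 1 := by
      refine le_antisymm (Finset.sup_le fun a ha => ?_)
        (Finset.le_sup (f := id) (Finset.mem_insert_self _ _))
      rcases Finset.mem_insert.mp ha with rfl | h
      · simp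
      · have := hSIcc2 a h; simp only [id_eq]; omega
    have hcoreB : core (insert (n - 1) S) = S := by
      rw [core, if_neg h1B, hsupB, Finset.erase_insert hn1S]
    refine ⟨?_, ?_, ?_⟩
    · rw [hBeq, mem_SchV]
      refine ⟨?_, ?_, ?_⟩
      · intro x hx
        rcases Finset.mem_insert.mp hx with rfl | h
        · simp only [Finset.mem_Icc]; omega
        · have := hSIcc2 x h; simp only [Finset.mem_Icc]; omega
      · rw [Finset.card_insert_of_notMem hn1S, hScard]; omega
      · intro x hx hcon
        rcases Finset.mem_insert.mp hx with rfl | h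
        · rw [Nat.mod_self, Nat.zero_add] at hcon
          rcases Finset.mem_insert.mp hcon with h | h
          · omega
          · have := hSIcc2 1 h; omega
        · obtain ⟨a, ha, rfl⟩ := (hmemS _).mp h
          have haI := hYIcc a ha
          have han3 : a ≠ n - 3 := fun h => htop (h ▸ ha)
          rw [Nat.mod_eq_of_lt (show a + 1 < n - 1 by omega)] at hcon
          rcases Finset.mem_insert.mp hcon with h' | h'
          · omega
          · obtain ⟨b, hb, hbe⟩ := (hmemS _).mp h'
            have hba : b = a + 1 := by omega
            have h := hindY a ha
            rw [Nat.mod_eq_of_lt (show a < n - 3 by omega)] at h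
            exact h (hba ▸ hb)
    · apply level_ge_one_iff.mpr
      refine ⟨1, le_refl _, by omega, ?_⟩
      rw [Lam_one (show 1 ≤ n - 1 by omega), hBeq]
      intro x hx
      rw [Finset.mem_singleton.mp hx]
      exact Finset.mem_insert_self _ _
    · rw [hBeq]
      exact hfinal _ hcoreB

/-- For `k ≥ 2` and `n ≥ 2k+1`, the restriction of `f(X) = core(X) − 1`
to `{clone_n(B) : B ∈ V⁺(n−1,k)}` is a bijection onto `V(n−3,k−1)`. -/
theorem fCore_bijOn_clones (k n : ℕ) (hk : 2 ≤ k) (hn : 2 * k + 1 ≤ n) :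
    Set.BijOn fCore
      ((fun B => cloneN n B) ''
        {B | B ∈ SchV (n - 1) k ∧ 1 ≤ level (n - 1) B})
      {Y | Y ∈ SchV (n - 3) (k - 1)} := by
  have hn5 : 5 ≤ n := by omega
  refine ⟨?_, ?_, ?_⟩
  · rintro X ⟨B, ⟨hB, hl⟩, rfl⟩
    obtain ⟨hsub, hcard, hind, h2⟩ := core_clone_props hk hn hB hl
    show fCore (cloneN n B) ∈ SchV (n - 3) (k - 1)
    have he : fCore (cloneN n B) = (core B).image (fun a => a - 1) := by
      rw [fCore, cloneN, core_insert_top hsub hn5]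
    rw [he]
    exact image_mem_SchV hn5 hsub hcard hind h2
  · rintro X₁ ⟨B₁, ⟨hB₁, hl₁⟩, rfl⟩ X₂ ⟨B₂, ⟨hB₂, hl₂⟩, rfl⟩ hf
    obtain ⟨hsub₁, -, -, -⟩ := core_clone_props hk hn hB₁ hl₁
    obtain ⟨hsub₂, -, -, -⟩ := core_clone_props hk hn hB₂ hl₂
    have hf' : fCore (cloneN n B₁) = fCore (cloneN n B₂) := hf
    rw [fCore, fCore, cloneN, cloneN, core_insert_top hsub₁ hn5,
      core_insert_top hsub₂ hn5] at hf'
    have hC : core B₁ = core B₂ := by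
      ext a
      constructor <;> intro ha
      · have h1 : a - 1 ∈ (core B₂).image (fun a => a - 1) :=
          hf' ▸ Finset.mem_image_of_mem _ ha
        obtain ⟨b, hb, he⟩ := Finset.mem_image.mp h1
        have ha' := Finset.mem_Icc.mp (hsub₁ ha)
        have hb' := Finset.mem_Icc.mp (hsub₂ hb)
        have hba : b = a := by omega
        exact hba ▸ hb
      · have h1 : a - 1 ∈ (core B₁).image (fun a => a - 1) :=
          hf'.symm ▸ Finset.mem_image_of_mem _ ha
        obtain ⟨b, hb, he⟩ := Finset.mem_image.mp h1
        have ha' := Finset.mem_Icc.mp (hsub₂ ha)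
        have hb' := Finset.mem_Icc.mp (hsub₁ hb)
        have hba : b = a := by omega
        exact hba ▸ hb
    show cloneN n B₁ = cloneN n B₂
    rw [cloneN, cloneN, hC]
  · intro Y hY
    have hY' : Y ∈ SchV (n - 3) (k - 1) := hY
    obtain ⟨hmem, hlev, hfc⟩ := gMap_props hk hn hY'
    exact ⟨cloneN n (gMap (n - 1) Y), ⟨gMap (n - 1) Y, ⟨hmem, hlev⟩, rfl⟩, hfc⟩
end
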